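/- If the antipode S of H is bijective and A is a left symmetric partial H-module algebra, then the set H·1_A = {h·1_A : h ∈ H} commutes elementwise with the subalgebra of right invariants A^{H,r}; consequently, the left and right invariant subalgebras coincide: A^H = A^{H,r}. -/

import Mathlib

open TensorProduct LinearMap

noncomputable section

variable (k : Type*) [Field k]
variable (H : Type*) [Ring H] [HopfAlgebra k H]
variable (A : Type*) [Ring A] [Algebra k A]

/-- A left partial action of a Hopf algebra `H` on an algebra `A` (Caenepeel–Janssen):
(PA1) `h·(ab) = (h₁·a)(h₂·b)`, (PA2) `1·a = a`, (PA3) `h·(g·a) = (h₁·1)((h₂g)·a)`. -/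
structure PartialAction where
  act : H →ₗ[k] A →ₗ[k] A
  pa1 : ∀ a b : A, act.flip (a * b) =
    LinearMap.mul' k A ∘ₗ TensorProduct.map (act.flip a) (act.flip b) ∘ₗ Coalgebra.comul
  pa2 : ∀ a : A, act 1 a = a
  pa3 : ∀ (g : H) (a : A), act.flip (act g a) =
    LinearMap.mul' k A ∘ₗ
      TensorProduct.map (act.flip 1) ((act.flip a) ∘ₗ LinearMap.mulRight k g) ∘ₗ Coalgebra.comul

variable {k H A}

/-- (PA4): the partial action is symmetric: `h·(g·a) = ((h₁g)·a)(h₂·1)`. -/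
def PartialAction.IsSymmetric (α : PartialAction k H A) : Prop :=
  ∀ (g : H) (a : A), α.act.flip (α.act g a) =
    LinearMap.mul' k A ∘ₗ
      TensorProduct.map ((α.act.flip a) ∘ₗ LinearMap.mulRight k g) (α.act.flip 1) ∘ₗ
        Coalgebra.comul

/-- Left invariants `A^H`. -/
def PartialAction.leftInv (α : PartialAction k H A) : Set A :=
  {a | ∀ h : H, α.act h a = a * α.act h 1}

/-- Right invariants `A^{H,r}`. -/
def PartialAction.rightInv (α : PartialAction k H A) : Set A :=
  {a | ∀ h : H, α.act h a = α.act h 1 * a}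

/-- `t` is a left integral in `H`. -/
def IsLeftIntegral (t : H) : Prop := ∀ h : H, h * t = Coalgebra.counit (R := k) h • t

/-- `t` is a right integral in `H`. -/
def IsRightIntegral (t : H) : Prop := ∀ h : H, t * h = Coalgebra.counit (R := k) h • t

/-- Convolution product on the dual `H* = H →ₗ[k] k`. -/
def conv (f g : H →ₗ[k] k) : H →ₗ[k] k :=
  LinearMap.mul' k k ∘ₗ TensorProduct.map f g ∘ₗ Coalgebra.comul

/-- `T ∈ H*` is a right integral: `T ∗ f = f(1) T`. -/
def IsRightIntegralDual (T : H →ₗ[k] k) : Prop := ∀ f : H →ₗ[k] k, conv T f = f 1 • T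

/-- `T ∈ H*` is a left integral: `f ∗ T = f(1) T`. -/
def IsLeftIntegralDual (T : H →ₗ[k] k) : Prop := ∀ f : H →ₗ[k] k, conv f T = f 1 • T

namespace PartialAction

variable (α : PartialAction k H A)

/-- `ψ (h ⊗ b) = Σ (h₁·b) ⊗ h₂`. -/
def psi : H ⊗[k] A →ₗ[k] A ⊗[k] H :=
  TensorProduct.map (TensorProduct.lift α.act) LinearMap.id
    ∘ₗ (TensorProduct.assoc k H A H).symm.toLinearMap
    ∘ₗ TensorProduct.map LinearMap.id (TensorProduct.comm k H A).toLinearMap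
    ∘ₗ (TensorProduct.assoc k H H A).toLinearMap
    ∘ₗ TensorProduct.map Coalgebra.comul LinearMap.id

/-- The smash product multiplication on `A ⊗ H`:
`(a # h)(b # g) = a(h₁·b) # h₂g`, as a linear map on the tensor square. -/
def smashMul' : (A ⊗[k] H) ⊗[k] (A ⊗[k] H) →ₗ[k] A ⊗[k] H :=
  TensorProduct.map (LinearMap.mul' k A) (LinearMap.mul' k H)
    ∘ₗ (TensorProduct.assoc k A A (H ⊗[k] H)).symm.toLinearMap
    ∘ₗ TensorProduct.map LinearMap.id
        ((TensorProduct.assoc k A H H).toLinearMap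
          ∘ₗ TensorProduct.map α.psi LinearMap.id
          ∘ₗ (TensorProduct.assoc k H A H).symm.toLinearMap)
    ∘ₗ (TensorProduct.assoc k A H (A ⊗[k] H)).toLinearMap

/-- The smash product multiplication, curried. -/
def sm : (A ⊗[k] H) →ₗ[k] (A ⊗[k] H) →ₗ[k] A ⊗[k] H := TensorProduct.curry α.smashMul'

/-- `1 # 1`. -/
def unit : A ⊗[k] H := (1 : A) ⊗ₜ[k] (1 : H)

/-- `j x = x · (1 # 1)`; the element `a #̲ h` of the partial smash product. -/
def j : A ⊗[k] H →ₗ[k] A ⊗[k] H := α.sm.flip (unit)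

/-- The partial smash product `A #̲ H`, as a subspace of `A ⊗ H`. -/
def smash : Submodule k (A ⊗[k] H) := LinearMap.range α.j

/-- The action of `A # H` on `A`: `(a # h) ▸ b = a (h·b)`. -/
def act2 : A ⊗[k] H →ₗ[k] A →ₗ[k] A :=
  TensorProduct.curry (LinearMap.mul' k A
    ∘ₗ TensorProduct.map LinearMap.id (TensorProduct.lift α.act)
    ∘ₗ (TensorProduct.assoc k A H A).toLinearMap)

end PartialAction

/-- `Φ(a # h) = a T(h)`. -/
def PhiMap (T : H →ₗ[k] k) : A ⊗[k] H →ₗ[k] A :=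
  (TensorProduct.rid k A).toLinearMap ∘ₗ TensorProduct.map LinearMap.id T

/-- `θ(f) = f(t₁) t₂`. -/
def thetaMap (t : H) : (H →ₗ[k] k) →ₗ[k] H :=
  (TensorProduct.lid k H).toLinearMap
    ∘ₗ LinearMap.applyₗ (Coalgebra.comul (R := k) t)
    ∘ₗ (TensorProduct.mapBilinear (RingHom.id k) H H k H).flip LinearMap.id

/-!
Write `h·x` for the action. By (PA3) and the antipode axiom, `(h·1) x = h₁·(S(h₂)·x)`; by (PA4)
and `h₂ S⁻¹(h₁) = ε(h)`, `x (h·1) = h₂·(S⁻¹(h₁)·x)`. By (PA1), a left invariant `a` satisfies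
`h·(a x) = a (h·x)` and a right invariant satisfies `h·(x a) = (h·x) a`. Taking `x = a` in the
first (resp. second) formula and pulling `a` out shows that `h·1` commutes with every left
(resp. right) invariant, and then the two invariance conditions coincide.
-/

open Coalgebra HopfAlgebra

lemma Coalgebra.sum_counit_smul_left {R C ι : Type*} [CommSemiring R] [AddCommMonoid C]
    [Module R C] [Coalgebra R C] {c : C} (r : Repr R c ι) :
    ∑ i ∈ r.index, counit (R := R) (r.right i) • r.left i = c := by
  simpa only [map_sum, _root_.TensorProduct.rid_tmul, one_smul] using
    congrArg (_root_.TensorProduct.rid R C) (sum_tmul_counit_eq (R := R) r)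

section Antipode

variable {ι : Type*} {h : H}

def antipodeInv (hS : Function.Bijective (antipode k (A := H))) : H →ₗ[k] H :=
  (LinearEquiv.ofBijective _ hS).symm.toLinearMap

lemma antipode_antipodeInv (hS : Function.Bijective (antipode k (A := H))) (x : H) :
    antipode k (antipodeInv hS x) = x :=
  (LinearEquiv.ofBijective _ hS).apply_symm_apply x

lemma sum_right_mul_antipodeInv_left (hS : Function.Bijective (antipode k (A := H)))
    (r : Repr k h ι) :
    ∑ i ∈ r.index, r.right i * antipodeInv hS (r.left i) = algebraMap k H (counit h) := by
  apply hS.injective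
  simp only [map_sum, antipode_mul_antidistrib, antipode_antipodeInv,
    sum_mul_antipode_eq_algebraMap_counit, Algebra.algebraMap_eq_smul_one, map_smul,
    antipode_one]

end Antipode

namespace PartialAction

variable (α : PartialAction k H A) {ι : Type*} {h : H}

lemma act_mul_eq_sum (r : Repr k h ι) (a b : A) :
    α.act h (a * b) = ∑ i ∈ r.index, α.act (r.left i) a * α.act (r.right i) b := by
  simpa [← r.eq, map_sum] using LinearMap.congr_fun (α.pa1 a b) h

lemma act_act_eq_sum (r : Repr k h ι) (g : H) (a : A) :
    α.act h (α.act g a) = ∑ i ∈ r.index, α.act (r.left i) 1 * α.act (r.right i * g) a := by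
  simpa [← r.eq, map_sum] using LinearMap.congr_fun (α.pa3 g a) h

lemma IsSymmetric.act_act_eq_sum {α : PartialAction k H A} (hsym : α.IsSymmetric)
    (r : Repr k h ι) (g : H) (a : A) :
    α.act h (α.act g a) = ∑ i ∈ r.index, α.act (r.left i * g) a * α.act (r.right i) 1 := by
  simpa [← r.eq, map_sum] using LinearMap.congr_fun (hsym g a) h

lemma act_algebraMap (c : k) (a : A) : α.act (algebraMap k H c) a = c • a := by
  rw [Algebra.algebraMap_eq_smul_one, map_smul, LinearMap.smul_apply, α.pa2]

lemma act_one_mul_eq_sum_act_act_antipode (r : Repr k h ι) (x : A) :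
    α.act h 1 * x = ∑ i ∈ r.index, α.act (r.left i) (α.act (antipode k (r.right i)) x) := by
  -- `L (u ⊗ v ⊗ w) = (u·1) ((v S(w))·x)`
  let L : H ⊗[k] (H ⊗[k] H) →ₗ[k] A :=
    LinearMap.mul' k A ∘ₗ TensorProduct.map (α.act.flip 1)
      (α.act.flip x ∘ₗ LinearMap.mul' k H ∘ₗ TensorProduct.map LinearMap.id (antipode k))
  have coassoc := congrArg L (sum_tmul_tmul_eq r (fun i ↦ ℛ k (r.left i)) fun i ↦ ℛ k (r.right i))
  simp only [L, map_sum, LinearMap.comp_apply, TensorProduct.map_tmul, LinearMap.mul'_apply,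
    LinearMap.id_apply, LinearMap.flip_apply] at coassoc
  calc α.act h 1 * x = ∑ i ∈ r.index, α.act (r.left i) 1 * (counit (R := k) (r.right i) • x) := by
        conv_lhs => rw [← sum_counit_smul_left r]
        simp only [map_sum, map_smul, LinearMap.sum_apply, LinearMap.smul_apply, Finset.sum_mul,
          smul_mul_assoc, mul_smul_comm]
    _ = ∑ i ∈ r.index, ∑ j ∈ (ℛ k (r.right i)).index, α.act (r.left i) 1 *
          α.act ((ℛ k (r.right i)).left j * antipode k ((ℛ k (r.right i)).right j)) x := by
        simp only [← Finset.mul_sum, ← LinearMap.sum_apply, ← map_sum,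
          sum_mul_antipode_eq_algebraMap_counit, act_algebraMap]
    _ = _ := by simp only [← coassoc, α.act_act_eq_sum (ℛ k (r.left _))]

lemma IsSymmetric.mul_act_one_eq_sum_act_act_antipodeInv {α : PartialAction k H A}
    (hsym : α.IsSymmetric) (hS : Function.Bijective (antipode k (A := H))) (r : Repr k h ι)
    (x : A) :
    x * α.act h 1 = ∑ i ∈ r.index, α.act (r.right i) (α.act (antipodeInv hS (r.left i)) x) := by
  -- `L (u ⊗ v ⊗ w) = ((v S⁻¹(u))·x) (w·1)`
  let L : H ⊗[k] (H ⊗[k] H) →ₗ[k] A :=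
    LinearMap.mul' k A ∘ₗ
      TensorProduct.map
        (α.act.flip x ∘ₗ LinearMap.mul' k H ∘ₗ TensorProduct.map LinearMap.id (antipodeInv hS) ∘ₗ
          (TensorProduct.comm k H H).toLinearMap)
        (α.act.flip 1) ∘ₗ
      (TensorProduct.assoc k H H H).symm.toLinearMap
  have coassoc := congrArg L (sum_tmul_tmul_eq r (fun i ↦ ℛ k (r.left i)) fun i ↦ ℛ k (r.right i))
  simp only [L, map_sum, LinearMap.comp_apply, LinearEquiv.coe_coe,
    TensorProduct.assoc_symm_tmul, TensorProduct.comm_tmul, TensorProduct.map_tmul,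
    LinearMap.mul'_apply, LinearMap.id_apply, LinearMap.flip_apply] at coassoc
  calc x * α.act h 1 = ∑ i ∈ r.index, (counit (R := k) (r.left i) • x) * α.act (r.right i) 1 := by
        conv_lhs => rw [← sum_counit_smul r]
        simp only [map_sum, map_smul, LinearMap.sum_apply, LinearMap.smul_apply, Finset.mul_sum,
          smul_mul_assoc, mul_smul_comm]
    _ = ∑ i ∈ r.index, ∑ j ∈ (ℛ k (r.left i)).index,
          α.act ((ℛ k (r.left i)).right j * antipodeInv hS ((ℛ k (r.left i)).left j)) x *
            α.act (r.right i) 1 := by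
        simp only [← Finset.sum_mul, ← LinearMap.sum_apply, ← map_sum,
          sum_right_mul_antipodeInv_left, act_algebraMap]
    _ = _ := by simp only [coassoc, hsym.act_act_eq_sum (ℛ k (r.right _))]

lemma act_mul_of_mem_leftInv {a : A} (ha : a ∈ α.leftInv) (h : H) (x : A) :
    α.act h (a * x) = a * α.act h x := by
  let r := ℛ k h
  calc α.act h (a * x) = ∑ i ∈ r.index, a * (α.act (r.left i) 1 * α.act (r.right i) x) := by
        simp only [α.act_mul_eq_sum r, ha _, mul_assoc]
    _ = a * α.act h x := by rw [← Finset.mul_sum, ← α.act_mul_eq_sum r, one_mul]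

lemma act_mul_of_mem_rightInv {a : A} (ha : a ∈ α.rightInv) (h : H) (x : A) :
    α.act h (x * a) = α.act h x * a := by
  let r := ℛ k h
  calc α.act h (x * a) = ∑ i ∈ r.index, α.act (r.left i) x * α.act (r.right i) 1 * a := by
        simp only [α.act_mul_eq_sum r, ha _, mul_assoc]
    _ = α.act h x * a := by rw [← Finset.sum_mul, ← α.act_mul_eq_sum r, mul_one]

lemma commute_act_one_of_mem_leftInv {a : A} (ha : a ∈ α.leftInv) (h : H) :
    Commute (α.act h 1) a := by
  let r := ℛ k h
  calc α.act h 1 * a = ∑ i ∈ r.index, α.act (r.left i) (a * α.act (antipode k (r.right i)) 1) := by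
        simp only [α.act_one_mul_eq_sum_act_act_antipode r, ha _]
    _ = a * (α.act h 1 * 1) := by
        simp only [α.act_mul_of_mem_leftInv ha, ← Finset.mul_sum,
          ← α.act_one_mul_eq_sum_act_act_antipode r]
    _ = a * α.act h 1 := by rw [mul_one]

lemma IsSymmetric.commute_act_one_of_mem_rightInv {α : PartialAction k H A}
    (hsym : α.IsSymmetric) (hS : Function.Bijective (antipode k (A := H))) {a : A}
    (ha : a ∈ α.rightInv) (h : H) : Commute (α.act h 1) a := by
  let r := ℛ k h
  symm
  calc a * α.act h 1
      = ∑ i ∈ r.index, α.act (r.right i) (α.act (antipodeInv hS (r.left i)) 1 * a) := by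
        simp only [hsym.mul_act_one_eq_sum_act_act_antipodeInv hS r, ha _]
    _ = 1 * α.act h 1 * a := by
        simp only [α.act_mul_of_mem_rightInv ha, ← Finset.sum_mul,
          ← hsym.mul_act_one_eq_sum_act_act_antipodeInv hS r]
    _ = α.act h 1 * a := by rw [one_mul]

lemma leftInv_subset_rightInv : α.leftInv ⊆ α.rightInv := fun a ha h ↦ by
  rw [ha h, (α.commute_act_one_of_mem_leftInv ha h).eq]

lemma IsSymmetric.rightInv_subset_leftInv {α : PartialAction k H A} (hsym : α.IsSymmetric)
    (hS : Function.Bijective (antipode k (A := H))) : α.rightInv ⊆ α.leftInv := fun a ha h ↦ by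
  rw [ha h, (hsym.commute_act_one_of_mem_rightInv hS ha h).eq]

end PartialAction

/-- if the antipode is bijective and the partial action is symmetric, then
`H·1_A` commutes with the right invariants, and the left and right invariants coincide. -/
theorem hOne_commutes_and_leftInv_eq_rightInv
    {k : Type*} [Field k] {H : Type*} [Ring H] [HopfAlgebra k H]
    {A : Type*} [Ring A] [Algebra k A] (α : PartialAction k H A)
    (hS : Function.Bijective (HopfAlgebra.antipode (R := k) (A := H)))
    (hsym : α.IsSymmetric) :
    (∀ a ∈ α.rightInv, ∀ h : H, α.act h 1 * a = a * α.act h 1) ∧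
      α.leftInv = α.rightInv :=
  ⟨fun _ ha h ↦ (hsym.commute_act_one_of_mem_rightInv hS ha h).eq,
    α.leftInv_subset_rightInv.antisymm (hsym.rightInv_subset_leftInv hS)⟩

end
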